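/- Vieta–Lucas wavelet coefficient bound: let k ≥ 1 and 1 ≤ s ≤ 2^{k−1} be natural numbers, set ŝ = 2(2s − 1), and let Y : ℝ → ℝ be twice continuously differentiable on [0, 2] with |Y''(ζ)| ≤ H for all ζ ∈ [0, 2], for some constant H ≥ 0. Define for m ∈ ℕ the coefficient Λ_{s,m} = ∫_{(ŝ−2)/2^k}^{(ŝ+2)/2^k} Y(ζ) · 2^{k/2} · (1/√(2π)) · VL_m(2^k ζ − ŝ) · (1/√(4 − (2^k ζ − ŝ)²)) dζ. Then for every m ≥ 2, |Λ_{s,m}| ≤ H · √π · 2^{(−5k+5)/2} / (m² − 1). -/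

import Mathlib

open Real MeasureTheory

/-- The Vieta–Lucas polynomials, defined recursively. -/
noncomputable def VL : ℕ → ℝ → ℝ
  | 0, _ => 2
  | 1, ζ => ζ
  | (m + 2), ζ => ζ * VL (m + 1) ζ - VL m ζ

/-! Substituting `2 ^ k * ζ - ŝ = 2 * cos θ` turns `Λ m` into `2 ^ (k / 2) / √(2π) * 2 / 2 ^ k`
times the cosine coefficient `∫ θ in 0..π, Y ((2 * cos θ + ŝ) / 2 ^ k) * cos (m * θ)`, because
`VL m (2 * cos θ) = 2 * cos (m * θ)` and the weight cancels the Jacobian `2 * sin θ`. Integrating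
by parts twice, with `2 * sin θ * sin (m * θ) = cos ((m - 1) * θ) - cos ((m + 1) * θ)` in between,
bounds that coefficient by `8 * H / (2 ^ (2 * k) * (m ^ 2 - 1))`; the stated constant then only
needs `2 ≤ π`. -/

open Set intervalIntegral Topology

theorem VL_two_mul_cos (m : ℕ) (θ : ℝ) : VL m (2 * cos θ) = 2 * cos (m * θ) := by
  induction m using Nat.twoStepInduction with
  | zero => simp [VL]
  | one => simp [VL]
  | more n ih₀ ih₁ =>
    rw [VL, ih₀, ih₁]
    push_cast
    rw [show ((n : ℝ) + 2) * θ = (n + 1) * θ + θ by ring,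
      show (n : ℝ) * θ = (n + 1) * θ - θ by ring, cos_add, cos_sub]
    ring

theorem two_mul_cos_mem_Icc (θ : ℝ) : 2 * cos θ ∈ Icc (-2 : ℝ) 2 := by
  constructor <;> linarith [neg_one_le_cos θ, cos_le_one θ]

theorem image_two_mul_cos_Ioo : (2 * cos ·) '' Ioo 0 π = Ioo (-2 : ℝ) 2 := by
  have hcos : cos '' Ioo 0 π = Ioo (-1) 1 := cosPartialHomeomorph.image_source_eq_target
  rw [← image_image (2 * ·) cos, hcos]
  simpa using image_mul_left_Ioo (zero_lt_two' ℝ) (-1) 1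

theorem two_mul_cos_mem_Ioo {θ : ℝ} (hθ : θ ∈ Ioo 0 π) : 2 * cos θ ∈ Ioo (-2 : ℝ) 2 :=
  image_two_mul_cos_Ioo ▸ mem_image_of_mem _ hθ

theorem integral_mul_VL_div_sqrt (h : ℝ → ℝ) (m : ℕ) :
    ∫ x in (-2)..2, h x * VL m x / √(4 - x ^ 2)
      = 2 * ∫ θ in 0..π, h (2 * cos θ) * cos (m * θ) := by
  have hderiv (θ : ℝ) : HasDerivWithinAt (2 * cos ·) (2 * -sin θ) (Ioo 0 π) θ :=
    ((hasDerivAt_cos θ).const_mul 2).hasDerivWithinAt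
  have hinj : InjOn (2 * cos ·) (Ioo 0 π) := fun x hx y hy hxy =>
    injOn_cos (Ioo_subset_Icc_self hx) (Ioo_subset_Icc_self hy) (by simpa using hxy)
  rw [integral_of_le (by norm_num), integral_of_le pi_pos.le, integral_Ioc_eq_integral_Ioo,
    integral_Ioc_eq_integral_Ioo, ← image_two_mul_cos_Ioo,
    integral_image_eq_integral_abs_deriv_smul measurableSet_Ioo (fun θ _ => hderiv θ) hinj,
    ← MeasureTheory.integral_const_mul]
  refine setIntegral_congr_fun measurableSet_Ioo fun θ hθ => ?_
  have hsin : 0 < sin θ := sin_pos_of_pos_of_lt_pi hθ.1 hθ.2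
  have hsqrt : √(4 - (2 * cos θ) ^ 2) = 2 * sin θ := by
    rw [show 4 - (2 * cos θ) ^ 2 = (2 * sin θ) ^ 2 by nlinarith [sin_sq_add_cos_sq θ],
      sqrt_sq (by positivity)]
  simp only [smul_eq_mul, VL_two_mul_cos, hsqrt, abs_mul, abs_neg, abs_two, abs_of_pos hsin]
  field_simp

theorem integral_mul_VL_comp_mul_sub_div_sqrt (Y : ℝ → ℝ) (m : ℕ) {K : ℝ} (hK : K ≠ 0) (c : ℝ) :
    ∫ ζ in (c - 2) / K..(c + 2) / K, Y ζ * VL m (K * ζ - c) / √(4 - (K * ζ - c) ^ 2)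
      = 2 / K * ∫ θ in 0..π, Y ((2 * cos θ + c) / K) * cos (m * θ) := by
  set f : ℝ → ℝ := fun x => Y ((x + c) / K) * VL m x / √(4 - x ^ 2)
  have hf (ζ : ℝ) : Y ζ * VL m (K * ζ - c) / √(4 - (K * ζ - c) ^ 2) = f (K * ζ - c) := by
    simp only [f, sub_add_cancel, mul_div_cancel_left₀ _ hK]
  simp only [hf, integral_comp_mul_sub f hK c, mul_div_cancel₀ _ hK, sub_sub_cancel_left,
    add_sub_cancel_left, f, integral_mul_VL_div_sqrt, smul_eq_mul]
  ring

theorem integral_mul_cos_nat_mul {u u' : ℝ → ℝ} {n : ℕ} (hn : n ≠ 0)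
    (hu : ContinuousOn u (Icc 0 π)) (hu' : IntervalIntegrable u' volume 0 π)
    (hderiv : ∀ θ ∈ Ioo 0 π, HasDerivAt u (u' θ) θ) :
    ∫ θ in 0..π, u θ * cos (n * θ) = -(∫ θ in 0..π, u' θ * sin (n * θ)) / n := by
  have hn' : (n : ℝ) ≠ 0 := Nat.cast_ne_zero.mpr hn
  have hsin (θ : ℝ) : HasDerivAt (fun θ => sin (n * θ) / n) (cos (n * θ)) θ := by
    simpa [hn'] using (((hasDerivAt_id θ).const_mul (n : ℝ)).sin).div_const (n : ℝ)
  rw [integral_mul_deriv_eq_deriv_mul_of_hasDerivAt (by rwa [uIcc_of_le pi_pos.le])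
    (by fun_prop) (by simpa [pi_pos.le] using hderiv) (fun θ _ => hsin θ) hu'
    ((by fun_prop : Continuous _).intervalIntegrable _ _)]
  simp only [sin_nat_mul_pi, mul_zero, sin_zero, zero_div, sub_zero, ← mul_div_assoc,
    intervalIntegral.integral_div]
  ring

theorem abs_integral_comp_two_mul_cos_mul_cos_le {f f' : ℝ → ℝ} {M : ℝ} {n : ℕ} (hn : n ≠ 0)
    (hf : ContinuousOn f (Icc (-2) 2)) (hf' : ContinuousOn f' (Icc (-2) 2))
    (hderiv : ∀ x ∈ Ioo (-2) 2, HasDerivAt f (f' x) x)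
    (hbound : ∀ x ∈ Icc (-2) 2, |f' x| ≤ M) :
    |∫ θ in 0..π, f (2 * cos θ) * cos (n * θ)| ≤ 4 * M / n := by
  have hmaps : MapsTo (2 * cos ·) (Icc 0 π) (Icc (-2) 2) := fun θ _ => two_mul_cos_mem_Icc θ
  have hu' : ContinuousOn (fun θ => f' (2 * cos θ) * (2 * -sin θ)) (Icc 0 π) :=
    (hf'.comp (by fun_prop) hmaps).mul (by fun_prop)
  rw [integral_mul_cos_nat_mul (u := fun θ => f (2 * cos θ)) hn (hf.comp (by fun_prop) hmaps)
      (hu'.intervalIntegrable_of_Icc pi_pos.le)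
      fun θ hθ => (hderiv _ (two_mul_cos_mem_Ioo hθ)).comp θ ((hasDerivAt_cos θ).const_mul 2),
    abs_div, abs_neg, Nat.abs_cast]
  gcongr
  calc |∫ θ in 0..π, f' (2 * cos θ) * (2 * -sin θ) * sin (n * θ)|
      ≤ ∫ θ in 0..π, 2 * M * sin θ := by
        rw [← Real.norm_eq_abs]
        refine intervalIntegral.norm_integral_le_of_norm_le pi_pos.le
          (ae_of_all volume fun θ hθ => ?_)
          ((continuous_const.mul continuous_sin).intervalIntegrable _ _)
        have hsin : 0 ≤ sin θ := sin_nonneg_of_nonneg_of_le_pi hθ.1.le hθ.2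
        rw [Real.norm_eq_abs, abs_mul, abs_mul, abs_mul, abs_neg, abs_two, abs_of_nonneg hsin]
        have hM := hbound _ (two_mul_cos_mem_Icc θ)
        have hM0 : 0 ≤ M := (abs_nonneg _).trans hM
        calc |f' (2 * cos θ)| * (2 * sin θ) * |sin (n * θ)| ≤ M * (2 * sin θ) * 1 := by
              gcongr
              exact abs_sin_le_one _
          _ = 2 * M * sin θ := by ring
    _ = 4 * M := by simp [integral_sin]; ring

theorem abs_integral_comp_two_mul_cos_mul_cos_le_of_deriv2 {f f' f'' : ℝ → ℝ} {M : ℝ} {m : ℕ}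
    (hm : 2 ≤ m) (hf : ContinuousOn f (Icc (-2) 2)) (hf' : ContinuousOn f' (Icc (-2) 2))
    (hf'' : ContinuousOn f'' (Icc (-2) 2))
    (hderiv : ∀ x ∈ Ioo (-2) 2, HasDerivAt f (f' x) x)
    (hderiv' : ∀ x ∈ Ioo (-2) 2, HasDerivAt f' (f'' x) x)
    (hbound : ∀ x ∈ Icc (-2) 2, |f'' x| ≤ M) :
    |∫ θ in 0..π, f (2 * cos θ) * cos (m * θ)| ≤ 8 * M / (m ^ 2 - 1) := by
  obtain ⟨n, rfl⟩ : ∃ n, m = n + 1 := ⟨m - 1, by omega⟩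
  have hn : n ≠ 0 := by omega
  have hmaps : MapsTo (2 * cos ·) (Icc 0 π) (Icc (-2) 2) := fun θ _ => two_mul_cos_mem_Icc θ
  have hg : ContinuousOn (fun θ => f' (2 * cos θ)) (Icc 0 π) := hf'.comp (by fun_prop) hmaps
  have hJ (j : ℕ) : IntervalIntegrable (fun θ => f' (2 * cos θ) * cos (j * θ)) volume 0 π :=
    (hg.mul (by fun_prop)).intervalIntegrable_of_Icc pi_pos.le
  -- After one integration by parts this product formula leaves two coefficients of `f'`.
  have hsplit (θ : ℝ) : f' (2 * cos θ) * (2 * -sin θ) * sin (((n + 1 : ℕ) : ℝ) * θ)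
      = f' (2 * cos θ) * cos (((n + 2 : ℕ) : ℝ) * θ) - f' (2 * cos θ) * cos (n * θ) := by
    push_cast
    rw [show ((n : ℝ) + 2) * θ = (n + 1) * θ + θ by ring,
      show (n : ℝ) * θ = (n + 1) * θ - θ by ring, cos_add, cos_sub]
    ring
  rw [integral_mul_cos_nat_mul (u := fun θ => f (2 * cos θ))
      (u' := fun θ => f' (2 * cos θ) * (2 * -sin θ)) n.add_one_ne_zero
      (hf.comp (by fun_prop) hmaps)
      ((hg.mul (by fun_prop)).intervalIntegrable_of_Icc pi_pos.le)
      fun θ hθ => (hderiv _ (two_mul_cos_mem_Ioo hθ)).comp θ ((hasDerivAt_cos θ).const_mul 2),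
    integral_congr fun θ _ => hsplit θ, integral_sub (hJ _) (hJ _)]
  have hJn := abs_integral_comp_two_mul_cos_mul_cos_le hn hf' hf'' hderiv' hbound
  have hJn2 := abs_integral_comp_two_mul_cos_mul_cos_le (n := n + 2) (by omega) hf' hf''
    hderiv' hbound
  rw [abs_div, abs_neg, Nat.abs_cast, div_le_iff₀ (by positivity)]
  calc _ ≤ 4 * M / ((n + 2 : ℕ) : ℝ) + 4 * M / n := (abs_sub _ _).trans (add_le_add hJn2 hJn)
    _ = 8 * M / (((n + 1 : ℕ) : ℝ) ^ 2 - 1) * ((n + 1 : ℕ) : ℝ) := by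
      push_cast
      rw [show ((n : ℝ) + 1) ^ 2 - 1 = n * (n + 2) by ring]
      field_simp
      ring

theorem ContDiffOn.hasDerivAt_iteratedDerivWithin {𝕜 F : Type*} [NontriviallyNormedField 𝕜]
    [NormedAddCommGroup F] [NormedSpace 𝕜 F] {f : 𝕜 → F} {s : Set 𝕜} {n : WithTop ℕ∞} {j : ℕ}
    (hf : ContDiffOn 𝕜 n f s) (hs : UniqueDiffOn 𝕜 s) (hj : j < n) {x : 𝕜} (hx : s ∈ 𝓝 x) :
    HasDerivAt (iteratedDerivWithin j f s) (iteratedDerivWithin (j + 1) f s x) x := by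
  rw [iteratedDerivWithin_succ, derivWithin_of_mem_nhds hx]
  exact (((hf.differentiableOn_iteratedDerivWithin hj hs) x (mem_of_mem_nhds hx)).differentiableAt
    hx).hasDerivAt

theorem hasDerivAt_comp_add_div {g : ℝ → ℝ} {g' c K x : ℝ} (h : HasDerivAt g g' ((x + c) / K)) :
    HasDerivAt (fun x => g ((x + c) / K)) (g' / K) x := by
  simpa [Function.comp_def, div_eq_mul_inv] using
    h.comp x (((hasDerivAt_id x).add_const c).div_const K)

theorem abs_integral_comp_cos_mul_cos_le_of_contDiffOn {Y : ℝ → ℝ} {a b c K H : ℝ} {m : ℕ}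
    (hm : 2 ≤ m) (hK : 0 < K) (ha : a ≤ (c - 2) / K) (hb : (c + 2) / K ≤ b)
    (hY : ContDiffOn ℝ 2 Y (Icc a b))
    (hY'' : ∀ ζ ∈ Icc a b, |iteratedDerivWithin 2 Y (Icc a b) ζ| ≤ H) :
    |∫ θ in 0..π, Y ((2 * cos θ + c) / K) * cos (m * θ)| ≤ 8 * (H / K ^ 2) / (m ^ 2 - 1) := by
  have hab : a < b :=
    ha.trans_lt <| (div_lt_div_of_pos_right (by linarith) hK).trans_le hb
  have hs : UniqueDiffOn ℝ (Icc a b) := uniqueDiffOn_Icc hab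
  have hmaps : MapsTo (fun x => (x + c) / K) (Icc (-2) 2) (Icc a b) := fun x hx =>
    ⟨ha.trans (div_le_div_of_nonneg_right (by linarith [hx.1]) hK.le),
      (div_le_div_of_nonneg_right (by linarith [hx.2]) hK.le).trans hb⟩
  have hnhds {x : ℝ} (hx : x ∈ Ioo (-2) 2) : Icc a b ∈ 𝓝 ((x + c) / K) :=
    Icc_mem_nhds (ha.trans_lt (div_lt_div_of_pos_right (by linarith [hx.1]) hK))
      ((div_lt_div_of_pos_right (by linarith [hx.2]) hK).trans_le hb)
  have hcont {j : ℕ} (hj : j ≤ 2) :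
      ContinuousOn (fun x => iteratedDerivWithin j Y (Icc a b) ((x + c) / K) / K ^ j)
        (Icc (-2) 2) :=
    ((hY.continuousOn_iteratedDerivWithin (by exact_mod_cast hj) hs).comp (by fun_prop)
      hmaps).div_const _
  have hderiv {j : ℕ} (hj : j < 2) (x : ℝ) (hx : x ∈ Ioo (-2) 2) :
      HasDerivAt (fun x => iteratedDerivWithin j Y (Icc a b) ((x + c) / K) / K ^ j)
        (iteratedDerivWithin (j + 1) Y (Icc a b) ((x + c) / K) / K ^ (j + 1)) x := by
    rw [pow_succ', ← div_div]
    exact (hasDerivAt_comp_add_div ((hY.hasDerivAt_iteratedDerivWithin hs (by exact_mod_cast hj)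
      (hnhds hx)))).div_const _
  have := abs_integral_comp_two_mul_cos_mul_cos_le_of_deriv2 hm (hcont (j := 0) (by norm_num))
    (hcont (j := 1) (by norm_num)) (hcont (j := 2) le_rfl) (hderiv (j := 0) (by norm_num))
    (hderiv (j := 1) (by norm_num)) (M := H / K ^ 2) fun x hx => by
      rw [abs_div, abs_of_pos (pow_pos hK 2)]
      exact div_le_div_of_nonneg_right (hY'' _ (hmaps hx)) (pow_pos hK 2).le
  simpa only [iteratedDerivWithin_zero, pow_zero, div_one] using this

theorem wavelet_constant_le (k : ℕ) :
    2 ^ ((k : ℝ) / 2) / √(2 * π) * (2 / 2 ^ k) * (8 / (2 ^ k) ^ 2)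
      ≤ √π * 2 ^ ((-5 * (k : ℝ) + 5) / 2) := by
  set x : ℝ := 2 ^ ((k : ℝ) / 2) with hxdef
  have hx : 0 < x := by positivity
  have hx2 : (2 : ℝ) ^ k = x ^ 2 := by
    rw [hxdef, ← rpow_mul_natCast zero_le_two]
    norm_num
  have hx5 : (2 : ℝ) ^ ((-5 * (k : ℝ) + 5) / 2) = 4 * √2 / x ^ 5 := by
    rw [eq_div_iff (by positivity), hxdef, ← rpow_mul_natCast zero_le_two, ← rpow_add two_pos,
      show (-5 * (k : ℝ) + 5) / 2 + k / 2 * (5 : ℕ) = 2 + 1 / 2 by push_cast; ring,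
      rpow_add two_pos, sqrt_eq_rpow]
    norm_num
  rw [hx2, hx5, sqrt_mul zero_le_two]
  field_simp
  nlinarith [sq_sqrt zero_le_two, sq_sqrt pi_pos.le, two_le_pi, pow_pos hx 5]

theorem vieta_lucas_wavelet_coefficient_bound_general
    (k s : ℕ) (hk : 1 ≤ k) (hs1 : 1 ≤ s) (hs2 : s ≤ 2 ^ (k - 1))
    (Y : ℝ → ℝ) (H : ℝ)
    (hY : ContDiffOn ℝ 2 Y (Set.Icc (0 : ℝ) 2))
    (hY'' : ∀ ζ ∈ Set.Icc (0 : ℝ) 2,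
      |iteratedDerivWithin 2 Y (Set.Icc (0 : ℝ) 2) ζ| ≤ H)
    (sh : ℝ) (hsh : sh = 2 * (2 * (s : ℝ) - 1))
    (Λ : ℕ → ℝ)
    (hΛ : ∀ m : ℕ, Λ m =
      ∫ ζ in ((sh - 2) / 2 ^ k)..((sh + 2) / 2 ^ k),
        Y ζ * 2 ^ ((k : ℝ) / 2) * (1 / Real.sqrt (2 * π)) *
          VL m (2 ^ k * ζ - sh) * (1 / Real.sqrt (4 - (2 ^ k * ζ - sh) ^ 2))) :
    ∀ m : ℕ, 2 ≤ m →
      |Λ m| ≤ H * Real.sqrt π * 2 ^ (((-5 : ℝ) * (k : ℝ) + 5) / 2) / ((m : ℝ) ^ 2 - 1) := by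
  intro m hm
  have hK : (0 : ℝ) < 2 ^ k := by positivity
  have hH : 0 ≤ H := (abs_nonneg _).trans (hY'' 0 ⟨le_rfl, zero_le_two⟩)
  have hm2 : (0 : ℝ) < m ^ 2 - 1 := by nlinarith [(Nat.ofNat_le_cast.mpr hm : (2 : ℝ) ≤ m)]
  have hs : (1 : ℝ) ≤ s := by exact_mod_cast hs1
  have hsk : 2 * (s : ℝ) ≤ 2 ^ k := by
    exact_mod_cast (show 2 * s ≤ 2 ^ k by rw [← Nat.sub_add_cancel hk, pow_succ]; omega)
  have hlow : 0 ≤ (sh - 2) / 2 ^ k := div_nonneg (by rw [hsh]; linarith) hK.le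
  have hhigh : (sh + 2) / 2 ^ k ≤ 2 := by rw [div_le_iff₀ hK, hsh]; linarith
  have hΛm : Λ m = 2 ^ ((k : ℝ) / 2) / √(2 * π) *
      (2 / 2 ^ k * ∫ θ in 0..π, Y ((2 * cos θ + sh) / 2 ^ k) * cos (m * θ)) := by
    rw [hΛ, ← integral_mul_VL_comp_mul_sub_div_sqrt Y m hK.ne',
      ← intervalIntegral.integral_const_mul]
    congr 1
    ext ζ
    ring
  rw [hΛm, abs_mul, abs_mul, abs_of_pos (by positivity), abs_of_pos (by positivity)]
  calc _ ≤ 2 ^ ((k : ℝ) / 2) / √(2 * π) * (2 / 2 ^ k) *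
        (8 * (H / (2 ^ k) ^ 2) / (m ^ 2 - 1)) := by
        rw [mul_assoc]
        gcongr
        exact abs_integral_comp_cos_mul_cos_le_of_contDiffOn hm hK hlow hhigh hY hY''
    _ = 2 ^ ((k : ℝ) / 2) / √(2 * π) * (2 / 2 ^ k) * (8 / (2 ^ k) ^ 2) * (H / (m ^ 2 - 1)) := by
        ring
    _ ≤ √π * 2 ^ ((-5 * (k : ℝ) + 5) / 2) * (H / (m ^ 2 - 1)) :=
        mul_le_mul_of_nonneg_right (wavelet_constant_le k) (div_nonneg hH hm2.le)
    _ = _ := by ring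

theorem vieta_lucas_wavelet_coefficient_bound
    (k s : ℕ) (hk : 1 ≤ k) (hs1 : 1 ≤ s) (hs2 : s ≤ 2 ^ (k - 1))
    (Y : ℝ → ℝ) (H : ℝ) (hH : 0 ≤ H)
    (hY : ContDiffOn ℝ 2 Y (Set.Icc (0 : ℝ) 2))
    (hY'' : ∀ ζ ∈ Set.Icc (0 : ℝ) 2,
      |iteratedDerivWithin 2 Y (Set.Icc (0 : ℝ) 2) ζ| ≤ H)
    (sh : ℝ) (hsh : sh = 2 * (2 * (s : ℝ) - 1))
    (Λ : ℕ → ℝ)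
    (hΛ : ∀ m : ℕ, Λ m =
      ∫ ζ in ((sh - 2) / 2 ^ k)..((sh + 2) / 2 ^ k),
        Y ζ * 2 ^ ((k : ℝ) / 2) * (1 / Real.sqrt (2 * π)) *
          VL m (2 ^ k * ζ - sh) * (1 / Real.sqrt (4 - (2 ^ k * ζ - sh) ^ 2))) :
    ∀ m : ℕ, 2 ≤ m →
      |Λ m| ≤ H * Real.sqrt π * 2 ^ (((-5 : ℝ) * (k : ℝ) + 5) / 2) / ((m : ℝ) ^ 2 - 1) :=
  vieta_lucas_wavelet_coefficient_bound_general k s hk hs1 hs2 Y H hY hY'' sh hsh Λ hΛ
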